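/- Define η : 𝔹₂ × ℂ² → ℝ≥0 by η(z;X) := ‖X‖ for z ≠ 0 and η(0;X) := max{‖X‖, |X₁|/ε} for 0 < ε < 1/√2, where 𝔹₂ ⊂ ℂ² is the unit Euclidean ball. Then η is an upper semicontinuous metric, 𝕎η(z;X) = √2·‖X‖ for z ≠ 0, and 𝕎η(0;(0,1)) < √2; consequently the Wu pseudometric 𝕎η is NOT upper semicontinuous at (0,(0,1)). -/

import Mathlib

/-!
The ellipsoid `{q_s < 1}` has volume `vol(𝔹) / det G_s`, `G_s` the Gram matrix of `s`, so `s^h` is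
the Hermitian product below `h` of largest Gram determinant.

Off the origin `h` is the Euclidean norm: any `s` with `q_s ≤ ‖·‖` has diagonal Gram entries at
most `1`, so `det G_s ≥ 1` forces `G_s = I` and `𝕎η(z; X) = √2 ‖X‖`.

At the origin put `m = ε⁻² > 2` (the paper's `X₁` is `X 0`, its `(0,1)` is `single 1 1`). If
`s^h(e₁, e₁) = 1`, testing `q_s ≤ h` at `e₀ ± √(m - 1) e₁` gives `s^h(e₀, e₀) ≤ 1`, hence
`det ≤ 1`; but the diagonal product with weights `m / 2` and `m / (2 (m - 1))` lies below `h` and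
has determinant `m² / (4 (m - 1)) > 1`. So `𝕎η(0; e₁) < √2`, while `𝕎η(z; e₁) = √2` for all
`z ≠ 0`, which breaks upper semicontinuity.
-/

noncomputable section

open Classical MeasureTheory Complex
open scoped ComplexConjugate

abbrev Cn (n : ℕ) := EuclideanSpace ℂ (Fin n)

instance {n : ℕ} : InnerProductSpace ℝ (Cn n) := InnerProductSpace.rclikeToReal ℂ _
instance {n : ℕ} : MeasurableSpace (Cn n) := borel _
instance {n : ℕ} : BorelSpace (Cn n) := ⟨rfl⟩

/-- A ℂ-seminorm on ℂⁿ. -/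
structure IsCSeminorm {n : ℕ} (h : Cn n → ℝ) : Prop where
  nonneg : ∀ X, 0 ≤ h X
  add_le : ∀ X Y, h (X + Y) ≤ h X + h Y
  smul : ∀ (t : ℂ) (X : Cn n), h (t • X) = ‖t‖ * h X

/-- A ℂ-norm on ℂⁿ. -/
def IsCNorm {n : ℕ} (h : Cn n → ℝ) : Prop :=
  IsCSeminorm h ∧ ∀ X, h X = 0 → X = 0

/-- A positive semidefinite Hermitian sesquilinear form on ℂⁿ,
linear in the first variable (convention ⟨z,w⟩ = Σ zⱼ conj wⱼ). -/
structure HermForm (n : ℕ) where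
  s : Cn n → Cn n → ℂ
  add_left : ∀ X Y Z, s (X + Y) Z = s X Z + s Y Z
  smul_left : ∀ (t : ℂ) (X Y : Cn n), s (t • X) Y = t * s X Y
  conj_symm : ∀ X Y, s Y X = conj (s X Y)
  nonneg : ∀ X, 0 ≤ (s X X).re

/-- Positive definiteness. -/
def HermForm.PosDef {n : ℕ} (s : HermForm n) : Prop := ∀ X, X ≠ 0 → 0 < (s.s X X).re

/-- q_s(X) = √ s(X,X). -/
def HermForm.q {n : ℕ} (s : HermForm n) (X : Cn n) : ℝ := Real.sqrt (s.s X X).re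

/-- The open unit ball E(s). -/
def HermForm.ball {n : ℕ} (s : HermForm n) : Set (Cn n) := {X | (s.s X X).re < 1}

/-- `s` is a minimal-volume positive definite Hermitian product with q_s ≤ h,
i.e. `s = s^h`. -/
def IsMinimalProd {n : ℕ} (h : Cn n → ℝ) (s : HermForm n) : Prop :=
  s.PosDef ∧ (∀ X, s.q X ≤ h X) ∧
    ∀ s' : HermForm n, s'.PosDef → (∀ X, s'.q X ≤ h X) →
      volume s.ball ≤ volume s'.ball

open Matrix
open scoped ComplexOrder MatrixOrder

namespace HermForm

variable {n : ℕ} (s : HermForm n)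

def gram : Matrix (Fin n) (Fin n) ℂ := fun i j =>
  s.s (EuclideanSpace.single j 1) (EuclideanSpace.single i 1)

def leftLinearMap (Y : Cn n) : Cn n →ₗ[ℂ] ℂ where
  toFun X := s.s X Y
  map_add' X Z := s.add_left X Z Y
  map_smul' t X := s.smul_left t X Y

lemma s_eq_sum_single_left (X Y : Cn n) :
    s.s X Y = ∑ j : Fin n, X j * s.s (EuclideanSpace.single j 1) Y := by
  have hX : X = ∑ j, X j • EuclideanSpace.single j (1 : ℂ) := by
    simpa using ((EuclideanSpace.basisFun (Fin n) ℂ).sum_repr X).symm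
  have h := map_sum (s.leftLinearMap Y) (fun j => X j • EuclideanSpace.single j (1 : ℂ)) Finset.univ
  simp only [map_smul, smul_eq_mul, ← hX] at h
  exact h

lemma s_eq_dotProduct_gram (X Y : Cn n) :
    s.s X Y = star (WithLp.ofLp Y) ⬝ᵥ (s.gram *ᵥ WithLp.ofLp X) := by
  have hY : ∀ j : Fin n, s.s (EuclideanSpace.single j 1) Y
      = ∑ i : Fin n, conj (Y i) * s.gram i j := fun j => by
    rw [s.conj_symm, s.s_eq_sum_single_left Y, map_sum]
    simp only [map_mul, ← s.conj_symm, gram]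
  rw [s.s_eq_sum_single_left]
  simp only [hY, dotProduct, Matrix.mulVec, Finset.mul_sum, Pi.star_apply, RCLike.star_def]
  rw [Finset.sum_comm]
  exact Finset.sum_congr rfl fun i _ => Finset.sum_congr rfl fun j _ => by ring

lemma q_eq_of_gram_eq {s s' : HermForm n} (h : s.gram = s'.gram) : s.q = s'.q := by
  ext X
  rw [q, q, s.s_eq_dotProduct_gram, s'.s_eq_dotProduct_gram, h]

lemma self_im (X : Cn n) : (s.s X X).im = 0 :=
  Complex.conj_eq_iff_im.mp (s.conj_symm X X).symm

lemma gram_apply_eq_conj (i j : Fin n) : s.gram i j = conj (s.gram j i) :=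
  s.conj_symm _ _

lemma im_gram_apply_self (i : Fin n) : (s.gram i i).im = 0 :=
  s.self_im _

lemma smul_self (t : ℂ) (X : Cn n) : s.s (t • X) (t • X) = normSq t * s.s X X := by
  rw [s.smul_left, s.conj_symm, s.smul_left, map_mul, ← s.conj_symm, ← mul_assoc,
    Complex.mul_conj]

lemma parallelogram (X Y : Cn n) :
    s.s (X + Y) (X + Y) + s.s (X - Y) (X - Y) = 2 * s.s X X + 2 * s.s Y Y := by
  simp only [s_eq_dotProduct_gram, WithLp.ofLp_add, WithLp.ofLp_sub, star_add, star_sub,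
    Matrix.mulVec_add, Matrix.mulVec_sub, add_dotProduct, dotProduct_add, sub_dotProduct,
    dotProduct_sub]
  ring

lemma re_self_le_sq {s : HermForm n} {h : Cn n → ℝ} (hq : ∀ X, s.q X ≤ h X) (X : Cn n) :
    (s.s X X).re ≤ h X ^ 2 := by
  rw [← Real.sq_sqrt (s.nonneg X)]
  exact pow_le_pow_left₀ (Real.sqrt_nonneg _) (hq X) 2

lemma gram_posSemidef : s.gram.PosSemidef := by
  rw [Matrix.posSemidef_iff_dotProduct_mulVec]
  refine ⟨Matrix.ext fun i j => (s.gram_apply_eq_conj i j).symm, fun x => ?_⟩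
  rw [← WithLp.ofLp_toLp 2 x, ← s.s_eq_dotProduct_gram]
  exact Complex.nonneg_iff.mpr ⟨s.nonneg _, (s.self_im _).symm⟩

section Factorization

variable {s} {B : Matrix (Fin n) (Fin n) ℂ} (hB : s.gram = star B * B)
include hB

lemma eq_inner_of_gram_eq (X Y : Cn n) :
    s.s X Y = inner ℂ (toEuclideanLin B Y) (toEuclideanLin B X) := by
  rw [s.s_eq_dotProduct_gram, hB, Matrix.star_eq_conjTranspose,
    EuclideanSpace.inner_eq_star_dotProduct, ← Matrix.mulVec_mulVec, Matrix.dotProduct_mulVec,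
    Matrix.vecMul_conjTranspose, star_star, dotProduct_comm]
  rfl

lemma re_self_eq_norm_sq (X : Cn n) : (s.s X X).re = ‖toEuclideanLin B X‖ ^ 2 := by
  rw [eq_inner_of_gram_eq hB]
  exact inner_self_eq_norm_sq (𝕜 := ℂ) _

lemma re_det_gram_eq : s.gram.det.re = normSq B.det := by
  rw [hB, Matrix.star_eq_conjTranspose, Matrix.det_mul, Matrix.det_conjTranspose, RCLike.star_def,
    ← Complex.normSq_eq_conj_mul_self, Complex.ofReal_re]

lemma det_ne_zero_of_posDef (hs : s.PosDef) : B.det ≠ 0 := by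
  intro h
  obtain ⟨v, hv, hBv⟩ := Matrix.exists_mulVec_eq_zero_iff.mpr h
  have := hs (WithLp.toLp 2 v) (by simpa using hv)
  simp [re_self_eq_norm_sq hB, hBv] at this

end Factorization

lemma re_det_gram_pos (hs : s.PosDef) : 0 < s.gram.det.re := by
  obtain ⟨B, hB⟩ := CStarAlgebra.nonneg_iff_eq_star_mul_self.mp s.gram_posSemidef.nonneg
  rw [re_det_gram_eq hB]
  exact Complex.normSq_pos.mpr (det_ne_zero_of_posDef hB hs)

/-- `s.ball` is the preimage of the unit ball under `B`, where `gram = Bᴴ B`, and as a real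
linear map `B` has determinant `|det B|² = det gram`. -/
lemma volume_ball (hs : s.PosDef) :
    volume s.ball = ENNReal.ofReal (s.gram.det.re)⁻¹ * volume (Metric.ball (0 : Cn n) 1) := by
  obtain ⟨B, hB⟩ := CStarAlgebra.nonneg_iff_eq_star_mul_self.mp s.gram_posSemidef.nonneg
  set L := (toEuclideanLin B).restrictScalars ℝ
  have hdet : LinearMap.det L = s.gram.det.re := by
    rw [LinearMap.det_restrictScalars, LinearMap.det_toLpLin, Algebra.norm_complex_apply,
      re_det_gram_eq hB]
  have hball : s.ball = L ⁻¹' Metric.ball 0 1 := by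
    ext X
    simp only [ball, Set.mem_ofPred_eq, Set.mem_preimage, mem_ball_zero_iff,
      re_self_eq_norm_sq hB]
    exact sq_lt_one_iff₀ (norm_nonneg _)
  have hpos := s.re_det_gram_pos hs
  rw [hball, MeasureTheory.Measure.addHaar_preimage_linearMap _ (hdet ▸ hpos.ne'), hdet,
    abs_of_pos (inv_pos.2 hpos)]

def diagonal (d : Fin n → ℝ) (hd : ∀ i, 0 ≤ d i) : HermForm n where
  s X Y := ∑ i, (d i : ℂ) * (X i * conj (Y i))
  add_left X Y Z := by
    rw [← Finset.sum_add_distrib]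
    exact Finset.sum_congr rfl fun i _ => by simp only [PiLp.add_apply]; ring
  smul_left t X Y := by
    rw [Finset.mul_sum]
    exact Finset.sum_congr rfl fun i _ => by simp only [PiLp.smul_apply, smul_eq_mul]; ring
  conj_symm X Y := by
    rw [map_sum]
    exact Finset.sum_congr rfl fun i _ => by
      simp only [map_mul, Complex.conj_conj, Complex.conj_ofReal]; ring
  nonneg X := by
    simp only [Complex.re_sum, Complex.mul_conj, ← Complex.ofReal_mul, Complex.ofReal_re]
    exact Finset.sum_nonneg fun i _ => mul_nonneg (hd i) (Complex.normSq_nonneg _)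

section Diagonal

variable (d : Fin n → ℝ) (hd : ∀ i, 0 ≤ d i)

lemma re_diagonal_self (X : Cn n) : ((diagonal d hd).s X X).re = ∑ i, d i * ‖X i‖ ^ 2 := by
  simp only [diagonal, Complex.re_sum, Complex.mul_conj, ← Complex.ofReal_mul, Complex.ofReal_re,
    Complex.normSq_eq_norm_sq]

lemma gram_diagonal : (diagonal d hd).gram = Matrix.diagonal fun i => (d i : ℂ) := by
  ext i j
  simp [gram, diagonal, Matrix.diagonal_apply, eq_comm]

lemma diagonal_posDef (hd' : ∀ i, 0 < d i) : (diagonal d fun i => (hd' i).le).PosDef := by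
  intro X hX
  obtain ⟨i, hi⟩ : ∃ i, X i ≠ 0 := by
    by_contra! h
    exact hX (PiLp.ext h)
  rw [re_diagonal_self]
  exact Finset.sum_pos' (fun j _ => mul_nonneg (hd' j).le (sq_nonneg _))
    ⟨i, Finset.mem_univ _, mul_pos (hd' i) (pow_pos (norm_pos_iff.mpr hi) 2)⟩

lemma q_diagonal_one (X : Cn n) : (diagonal 1 fun _ => zero_le_one).q X = ‖X‖ := by
  rw [q, re_diagonal_self, EuclideanSpace.norm_eq]
  simp

end Diagonal

lemma re_det_gram_two (s : HermForm 2) :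
    s.gram.det.re = (s.gram 0 0).re * (s.gram 1 1).re - normSq (s.gram 1 0) := by
  rw [Matrix.det_fin_two, s.gram_apply_eq_conj 0 1, Complex.sub_re, Complex.mul_re,
    s.im_gram_apply_self, s.im_gram_apply_self, mul_comm (conj _), Complex.mul_conj,
    Complex.ofReal_re]
  ring

end HermForm

lemma IsMinimalProd.re_det_gram_le {n : ℕ} {h : Cn n → ℝ} {s s' : HermForm n}
    (hs : IsMinimalProd h s) (hs' : s'.PosDef) (hq : ∀ X, s'.q X ≤ h X) :
    s'.gram.det.re ≤ s.gram.det.re := by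
  have hvol := hs.2.2 s' hs' hq
  rw [s.volume_ball hs.1, s'.volume_ball hs',
    ENNReal.mul_le_mul_iff_left (Metric.measure_ball_pos volume 0 one_pos).ne'
      measure_ball_lt_top.ne,
    ENNReal.ofReal_le_ofReal_iff (inv_pos.2 (s'.re_det_gram_pos hs')).le,
    inv_le_inv₀ (s.re_det_gram_pos hs.1) (s'.re_det_gram_pos hs')] at hvol
  exact hvol

lemma IsMinimalProd.q_eq_norm {s : HermForm 2} (hs : IsMinimalProd (fun X => ‖X‖) s) (X : Cn 2) :
    s.q X = ‖X‖ := by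
  have hdet := hs.re_det_gram_le (HermForm.diagonal_posDef 1 fun _ => one_pos)
    fun X => (HermForm.q_diagonal_one X).le
  rw [HermForm.gram_diagonal, HermForm.re_det_gram_two] at hdet
  simp only [Pi.one_apply, Complex.ofReal_one, Matrix.det_diagonal, Finset.prod_const_one,
    Complex.one_re] at hdet
  have ha : (s.gram 0 0).re ≤ 1 := (HermForm.re_self_le_sq hs.2.1 _).trans_eq (by simp)
  have hd : (s.gram 1 1).re ≤ 1 := (HermForm.re_self_le_sq hs.2.1 _).trans_eq (by simp)
  have ha0 : 0 ≤ (s.gram 0 0).re := s.nonneg _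
  have hd0 : 0 ≤ (s.gram 1 1).re := s.nonneg _
  have hb0 := Complex.normSq_nonneg (s.gram 1 0)
  have hb : s.gram 1 0 = 0 := Complex.normSq_eq_zero.mp (by nlinarith)
  have hgram : s.gram = (HermForm.diagonal 1 fun _ => zero_le_one).gram := by
    rw [HermForm.gram_diagonal]
    ext i j
    fin_cases i <;> fin_cases j
    · exact Complex.ext (by simp; nlinarith) (by simpa using s.im_gram_apply_self _)
    · simpa [hb] using s.gram_apply_eq_conj 0 1
    · simpa using hb
    · exact Complex.ext (by simp; nlinarith) (by simpa using s.im_gram_apply_self _)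
  rw [HermForm.q_eq_of_gram_eq hgram, HermForm.q_diagonal_one]

/-- The weights are those of the convex combination `λ ‖X‖² + (1 - λ) ‖X 0‖² / ε²` with
`λ = m / (2 (m - 1))`, the one of largest determinant. -/
lemma HermForm.q_diagonal_le_max {ε m : ℝ} (hε : 0 < ε) (hm : ε⁻¹ ^ 2 = m) (h2m : 2 ≤ m)
    (hd : ∀ i, 0 ≤ ![m / 2, m / (2 * (m - 1))] i) (X : Cn 2) :
    (diagonal _ hd).q X ≤ max ‖X‖ (‖X 0‖ / ε) := by
  have hl0 : 0 ≤ m / (2 * (m - 1)) := hd 1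
  have hl1 : m / (2 * (m - 1)) ≤ 1 := div_le_one_of_le₀ (by linarith) (by linarith)
  have hl : m / (2 * (m - 1)) * (m - 1) = m / 2 := by field_simp [show m - 1 ≠ 0 by linarith]
  have hcomb : ((diagonal _ hd).s X X).re
      = m / (2 * (m - 1)) * ‖X‖ ^ 2 + (1 - m / (2 * (m - 1))) * (‖X 0‖ / ε) ^ 2 := by
    rw [re_diagonal_self, EuclideanSpace.norm_sq_eq, Fin.sum_univ_two, Fin.sum_univ_two, div_pow,
      div_eq_mul_inv _ (ε ^ 2), ← inv_pow, hm]
    simp only [Matrix.cons_val_zero, Matrix.cons_val_one]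
    linear_combination ‖X 0‖ ^ 2 * hl
  rw [q, Real.sqrt_le_left (le_trans (norm_nonneg X) (le_max_left _ _)), hcomb]
  have hX := pow_le_pow_left₀ (norm_nonneg X) (le_max_left ‖X‖ (‖X 0‖ / ε)) 2
  have hX0 := pow_le_pow_left₀ (by positivity) (le_max_right ‖X‖ (‖X 0‖ / ε)) 2
  nlinarith

lemma HermForm.re_gram_add_le {s : HermForm 2} {ε m : ℝ} (hε : 0 < ε) (hm : ε⁻¹ ^ 2 = m)
    (h1m : 1 ≤ m) (hq : ∀ X, s.q X ≤ max ‖X‖ (‖X 0‖ / ε)) :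
    (s.gram 0 0).re + (m - 1) * (s.gram 1 1).re ≤ m := by
  set t := √(m - 1)
  have ht : t ^ 2 = m - 1 := Real.sq_sqrt (by linarith)
  have htest : ∀ w : Cn 2, w 0 = 1 → ‖w 1‖ = t → (s.s w w).re ≤ m := fun w h0 h1 => by
    have hnorm : ‖w‖ = ε⁻¹ := by
      rw [← pow_left_inj₀ (norm_nonneg _) (inv_nonneg.2 hε.le) two_ne_zero,
        EuclideanSpace.norm_sq_eq, Fin.sum_univ_two, h0, h1, hm, ht, norm_one]
      ring
    simpa [hnorm, h0, hm] using re_self_le_sq hq w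
  have hpar := congrArg Complex.re
    (s.parallelogram (EuclideanSpace.single 0 1) ((t : ℂ) • EuclideanSpace.single 1 1))
  simp only [s.smul_self, Complex.add_re, Complex.mul_re, Complex.normSq_ofReal, Complex.re_ofNat,
    Complex.im_ofNat, Complex.ofReal_re, Complex.ofReal_im, zero_mul, sub_zero, ← sq, ht] at hpar
  have hplus := htest (EuclideanSpace.single 0 1 + (t : ℂ) • EuclideanSpace.single 1 1)
    (by simp) (by simp [abs_of_nonneg (Real.sqrt_nonneg _), t])
  have hminus := htest (EuclideanSpace.single 0 1 - (t : ℂ) • EuclideanSpace.single 1 1)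
    (by simp) (by simp [abs_of_nonneg (Real.sqrt_nonneg _), t])
  show (s.s _ _).re + (m - 1) * (s.s _ _).re ≤ m
  linarith

lemma IsMinimalProd.q_single_one_lt_one {ε : ℝ} (hε : 0 < ε) (hε2 : ε < 1 / √2) {s : HermForm 2}
    (hs : IsMinimalProd (fun X => max ‖X‖ (‖X 0‖ / ε)) s) :
    s.q (EuclideanSpace.single 1 1) < 1 := by
  set m := ε⁻¹ ^ 2 with hm
  have h2m : 2 < m := by
    have hε_sq : ε ^ 2 < 2⁻¹ := by
      calc ε ^ 2 < (1 / √2) ^ 2 := pow_lt_pow_left₀ hε2 hε.le two_ne_zero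
        _ = 2⁻¹ := by rw [div_pow, Real.sq_sqrt zero_le_two, one_pow, one_div]
    rw [hm, inv_pow]
    exact (lt_inv_comm₀ two_pos (pow_pos hε 2)).mpr hε_sq
  have hweights : ∀ i, 0 < ![m / 2, m / (2 * (m - 1))] i := Fin.forall_fin_two.mpr
    ⟨by simp only [Matrix.cons_val_zero]; positivity,
      by simp only [Matrix.cons_val_one]; exact div_pos (by linarith) (by linarith)⟩
  have hdet := hs.re_det_gram_le (HermForm.diagonal_posDef _ hweights)
    (HermForm.q_diagonal_le_max hε hm.symm h2m.le _)
  rw [HermForm.gram_diagonal, HermForm.re_det_gram_two, Matrix.det_diagonal,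
    Fin.prod_univ_two] at hdet
  simp only [Matrix.cons_val_zero, Matrix.cons_val_one, ← Complex.ofReal_mul,
    Complex.ofReal_re] at hdet
  have hcompetitor : 1 < m / 2 * (m / (2 * (m - 1))) := by
    rw [div_mul_div_comm, one_lt_div (by nlinarith)]
    nlinarith [sq_pos_of_pos (sub_pos.mpr h2m)]
  have hsum := HermForm.re_gram_add_le hε hm.symm (by linarith) hs.2.1
  have hd1 : (s.gram 1 1).re ≤ 1 := (HermForm.re_self_le_sq hs.2.1 _).trans_eq (by simp)
  have hd0 : 0 ≤ (s.gram 1 1).re := s.nonneg _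
  have hb0 := Complex.normSq_nonneg (s.gram 1 0)
  rw [HermForm.q, Real.sqrt_lt' one_pos, one_pow]
  change (s.gram 1 1).re < 1
  by_contra! hd
  have ha : (s.gram 0 0).re ≤ 1 := by nlinarith
  nlinarith

section Norms

variable {n : ℕ}

lemma isCSeminorm_norm : IsCSeminorm fun X : Cn n => ‖X‖ :=
  ⟨norm_nonneg, norm_add_le, norm_smul⟩

lemma isCSeminorm_norm_apply_div (i : Fin n) {c : ℝ} (hc : 0 ≤ c) :
    IsCSeminorm fun X : Cn n => ‖X i‖ / c where
  nonneg X := by positivity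
  add_le X Y := by rw [← add_div]; exact div_le_div_of_nonneg_right (norm_add_le _ _) hc
  smul t X := by rw [PiLp.smul_apply, norm_smul, mul_div_assoc]

lemma IsCSeminorm.max {h k : Cn n → ℝ} (hh : IsCSeminorm h) (hk : IsCSeminorm k) :
    IsCSeminorm fun X => max (h X) (k X) where
  nonneg X := le_max_of_le_left (hh.nonneg X)
  add_le X Y := max_le
    ((hh.add_le X Y).trans (add_le_add (le_max_left _ _) (le_max_left _ _)))
    ((hk.add_le X Y).trans (add_le_add (le_max_right _ _) (le_max_right _ _)))
  smul t X := by rw [hh.smul, hk.smul, mul_max_of_nonneg _ _ (norm_nonneg t)]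

lemma IsCSeminorm.isCNorm_of_norm_le {h : Cn n → ℝ} (hh : IsCSeminorm h)
    (hle : ∀ X, ‖X‖ ≤ h X) : IsCNorm h :=
  ⟨hh, fun X hX => norm_eq_zero.mp (le_antisymm (hX ▸ hle X) (norm_nonneg X))⟩

lemma isCNorm_norm : IsCNorm fun X : Cn n => ‖X‖ :=
  isCSeminorm_norm.isCNorm_of_norm_le fun _ => le_rfl

lemma isCNorm_max_norm_norm_apply_div (i : Fin n) {c : ℝ} (hc : 0 ≤ c) :
    IsCNorm fun X : Cn n => max ‖X‖ (‖X i‖ / c) :=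
  (isCSeminorm_norm.max (isCSeminorm_norm_apply_div i hc)).isCNorm_of_norm_le
    fun _ => le_max_left _ _

end Norms

lemma upperSemicontinuous_ite_of_le {α : Type*} [TopologicalSpace α] {P : α → Prop}
    [DecidablePred P] (hP : IsClosed {x | P x}) {g k : α → ℝ} (hg : Continuous g)
    (hk : Continuous k) (hkg : ∀ x, k x ≤ g x) :
    UpperSemicontinuous fun x => if P x then g x else k x := by
  intro x y hy
  dsimp only at hy
  by_cases hx : P x
  · rw [if_pos hx] at hy
    filter_upwards [hg.continuousAt.eventually_lt continuousAt_const hy] with z hz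
    split_ifs
    exacts [hz, (hkg z).trans_lt hz]
  · rw [if_neg hx] at hy
    filter_upwards [hk.continuousAt.eventually_lt continuousAt_const hy,
      hP.isOpen_compl.mem_nhds hx] with z hz hPz
    rwa [if_neg (show ¬P z from hPz)]

lemma not_upperSemicontinuousWithinAt_ball_prod {E F : Type*} [NormedAddCommGroup E]
    [NormedSpace ℝ E] [Nontrivial E] [TopologicalSpace F] {f : E × F → ℝ} {Y : F} {c : ℝ}
    (h0 : f (0, Y) < c) (hf : ∀ z, z ≠ 0 → c ≤ f (z, Y)) :
    ¬ UpperSemicontinuousWithinAt f (Metric.ball 0 1 ×ˢ Set.univ) (0, Y) := by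
  intro H
  have hu : Filter.Tendsto (fun z => (z, Y)) (nhdsWithin (0 : E) {0}ᶜ)
      (nhdsWithin (0, Y) (Metric.ball 0 1 ×ˢ Set.univ)) := by
    refine tendsto_nhdsWithin_iff.mpr ⟨?_, ?_⟩
    · exact (Continuous.tendsto (by fun_prop) 0).mono_left nhdsWithin_le_nhds
    · filter_upwards [mem_nhdsWithin_of_mem_nhds (Metric.ball_mem_nhds (0 : E) one_pos)]
        with z hz using ⟨hz, Set.mem_univ _⟩
  obtain ⟨z, hlt, hz⟩ := ((hu.eventually (H c h0)).and self_mem_nhdsWithin).exists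
  exact (hf z hz).not_gt hlt

theorem stmt13 (ε : ℝ) (hε : 0 < ε) (hε2 : ε < 1 / Real.sqrt 2)
    (η : Cn 2 → Cn 2 → ℝ)
    (hdef : ∀ z X, η z X = if z = 0 then max ‖X‖ (‖X 0‖ / ε) else ‖X‖)
    (sel : Cn 2 → HermForm 2)
    (hsel : ∀ z, IsMinimalProd (η z) (sel z)) :
    UpperSemicontinuousOn (fun p : Cn 2 × Cn 2 => η p.1 p.2)
      (Metric.ball 0 1 ×ˢ Set.univ) ∧
    (∀ z, IsCNorm (η z)) ∧
    (∀ z, z ≠ 0 → ∀ X, Real.sqrt 2 * (sel z).q X = Real.sqrt 2 * ‖X‖) ∧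
    Real.sqrt 2 * (sel 0).q (EuclideanSpace.single 1 1) < Real.sqrt 2 ∧
    ¬ UpperSemicontinuousWithinAt
        (fun p : Cn 2 × Cn 2 => Real.sqrt 2 * (sel p.1).q p.2)
        (Metric.ball 0 1 ×ˢ Set.univ) (0, EuclideanSpace.single 1 1) := by
  have hη : ∀ z, z ≠ 0 → η z = fun X => ‖X‖ := fun z hz => funext fun X => by rw [hdef, if_neg hz]
  have hη0 : η 0 = fun X => max ‖X‖ (‖X 0‖ / ε) := funext fun X => by rw [hdef, if_pos rfl]
  have hWu : ∀ z, z ≠ 0 → ∀ X, (sel z).q X = ‖X‖ := fun z hz => (hη z hz ▸ hsel z).q_eq_norm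
  have hWu0 : √2 * (sel 0).q (EuclideanSpace.single 1 1) < √2 :=
    mul_lt_of_lt_one_right (by positivity) ((hη0 ▸ hsel 0).q_single_one_lt_one hε hε2)
  refine ⟨?_, fun z => ?_, fun z hz X => by rw [hWu z hz], hWu0, ?_⟩
  · have husc := upperSemicontinuous_ite_of_le (P := fun p : Cn 2 × Cn 2 => p.1 = 0)
      (isClosed_eq continuous_fst continuous_const) (g := fun p => max ‖p.2‖ (‖p.2 0‖ / ε))
      (k := fun p => ‖p.2‖) (by fun_prop) (by fun_prop) fun p => le_max_left _ _
    simpa only [hdef] using husc.upperSemicontinuousOn _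
  · by_cases hz : z = 0
    · rw [hz, hη0]
      exact isCNorm_max_norm_norm_apply_div 0 hε.le
    · rw [hη z hz]
      exact isCNorm_norm
  · exact not_upperSemicontinuousWithinAt_ball_prod hWu0 fun z hz => by simp [hWu z hz]
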